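/- arXiv:math/0310289 — 2 statements merged into one kernel-verified Lean document; each statement's English description precedes it below -/
import Mathlib

section
/- Let x : Fin n → F be a nonzero vector all of whose entries lie in the image of the constant embedding 𝔽q → F, and let g ∈ GL n F. Then there exists E ∈ ℤᵐ⁰ with E ≠ 0 such that for every γ ∈ GL n F lying in GL n R, ‖x·(γ*g : Matrix (Fin n) (Fin n) F)‖ ≥ E. (Proposition 10, first part: a uniform positive lower bound over all γ ∈ GL n R.) -/
/- Setting: `F = 𝔽q((X))` is the field of formal Laurent series over a finite field `𝔽q`,
with valuation `v = Valued.v : F → ℤₘ₀` (normalized by `v X = ofAdd (-1)`), ring of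
integers `O = 𝔽q[[X]] = {f | v f ≤ 1}`. -/

open scoped Multiplicative

noncomputable section

variable (𝔽q : Type*) [Field 𝔽q] [Fintype 𝔽q]

/-- `F = 𝔽q((X))`, the field of formal Laurent series over `𝔽q`. -/
abbrev F : Type _ := LaurentSeries 𝔽q

/-- The uniformizer `X` of `F`. -/
def XX : F 𝔽q := ((PowerSeries.X : PowerSeries 𝔽q) : LaurentSeries 𝔽q)

/-- The sup-norm `‖x‖ = sup_i v (x i)` of a row vector over `F`. -/
def vnorm {n : ℕ} (x : Fin n → F 𝔽q) : WithZero (Multiplicative ℤ) :=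
  Finset.univ.sup fun i => Valued.v (x i)

/-- `f` lies in the ring of integers `O = 𝔽q[[X]]` iff `v f ≤ 1`. -/
def inO (f : F 𝔽q) : Prop := Valued.v f ≤ 1

/-- `f` lies in `R = 𝔽q[X⁻¹]`: a Laurent series with finite support contained in
nonpositive degrees. -/
def inR (f : F 𝔽q) : Prop := f.support.Finite ∧ ∀ d ∈ f.support, d ≤ 0

/-- `g ∈ GL n F` lies in `GL n O`: every entry of `g` and of `g⁻¹` lies in `O`. -/
def inGLO {n : ℕ} (g : GL (Fin n) (F 𝔽q)) : Prop :=
  (∀ i j, inO 𝔽q ((g : Matrix (Fin n) (Fin n) (F 𝔽q)) i j)) ∧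
  (∀ i j, inO 𝔽q ((↑(g⁻¹) : Matrix (Fin n) (Fin n) (F 𝔽q)) i j))

/-- `γ ∈ GL n F` lies in `GL n R`: every entry of `γ` and of `γ⁻¹` lies in `R`. -/
def inGLR {n : ℕ} (γ : GL (Fin n) (F 𝔽q)) : Prop :=
  (∀ i j, inR 𝔽q ((γ : Matrix (Fin n) (Fin n) (F 𝔽q)) i j)) ∧
  (∀ i j, inR 𝔽q ((↑(γ⁻¹) : Matrix (Fin n) (Fin n) (F 𝔽q)) i j))

/-! A nonzero vector with entries in `R = 𝔽q[X⁻¹]` has norm at least `1`, since a nonzero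
polynomial in `X⁻¹` has valuation at least `1`. For `γ ∈ GL n R` the vector `x ⬝ γ` is such a
vector (it is nonzero because `γ` is invertible), and `x ⬝ γ = (x ⬝ γ g) ⬝ g⁻¹`. The ultrametric
bound `‖z ⬝ h‖ ≤ ‖z‖ · ‖h‖`, with `‖h‖` the largest valuation of an entry of `h`, then gives
`‖x ⬝ γ g‖ ≥ ‖g⁻¹‖⁻¹`, a bound independent of `γ`. -/

section

open Matrix

variable {𝔽q : Type*} [Field 𝔽q] {m n : ℕ}

lemma inR_C (c : 𝔽q) : inR 𝔽q (HahnSeries.C c) := by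
  refine ⟨(Set.finite_singleton 0).subset HahnSeries.support_single_subset, fun d hd => ?_⟩
  rw [HahnSeries.support_single_subset hd]

variable (𝔽q) in
def polyInvX : Subring (F 𝔽q) where
  carrier := {f | inR 𝔽q f}
  zero_mem' := by simp [inR]
  one_mem' := inR_C 1
  add_mem' {f g} hf hg := by
    refine ⟨(hf.1.union hg.1).subset (HahnSeries.support_add_subset _ _), fun d hd => ?_⟩
    rcases HahnSeries.support_add_subset _ _ hd with h | h
    exacts [hf.2 d h, hg.2 d h]
  mul_mem' {f g} hf hg := by
    refine ⟨(hf.1.add hg.1).subset HahnSeries.support_mul_subset, fun d hd => ?_⟩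
    obtain ⟨a, ha, b, hb, rfl⟩ := HahnSeries.support_mul_subset hd
    exact add_nonpos (hf.2 a ha) (hg.2 b hb)
  neg_mem' {f} hf := by simpa [inR, HahnSeries.support_neg] using hf

lemma one_le_valuation_of_inR {f : F 𝔽q} (hf : inR 𝔽q f) (hf0 : f ≠ 0) : 1 ≤ Valued.v f := by
  by_contra! hlt
  -- the value group is `ℤ`, so `v f < 1` means `v f ≤ v X`: all coefficients of degree `≤ 0` vanish
  have hle : Valued.v f ≤ WithZero.exp (-1 : ℤ) := by
    rwa [← WithZero.lt_mul_exp_iff_le WithZero.exp_ne_zero, ← WithZero.exp_add, neg_add_cancel,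
      WithZero.exp_zero]
  refine hf0 (HahnSeries.ext (funext fun d => ?_))
  rcases le_or_gt d 0 with hd | hd
  · exact LaurentSeries.coeff_zero_of_lt_valuation 𝔽q hle (by omega)
  · by_contra hc
    exact (hf.2 d hc).not_gt hd

lemma inR_vecMul {x : Fin m → F 𝔽q} {γ : Matrix (Fin m) (Fin n) (F 𝔽q)}
    (hx : ∀ i, inR 𝔽q (x i)) (hγ : ∀ i j, inR 𝔽q (γ i j)) (j : Fin n) :
    inR 𝔽q ((x ᵥ* γ) j) :=
  Subring.sum_mem (polyInvX 𝔽q) fun i _ => Subring.mul_mem _ (hx i) (hγ i j)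

def matNorm (h : Matrix (Fin m) (Fin n) (F 𝔽q)) : WithZero (Multiplicative ℤ) :=
  Finset.univ.sup fun p : Fin m × Fin n => Valued.v (h p.1 p.2)

lemma valuation_le_vnorm (x : Fin n → F 𝔽q) (i : Fin n) : Valued.v (x i) ≤ vnorm 𝔽q x :=
  Finset.le_sup (f := fun i => Valued.v (x i)) (Finset.mem_univ i)

lemma valuation_le_matNorm (h : Matrix (Fin m) (Fin n) (F 𝔽q)) (i : Fin m) (j : Fin n) :
    Valued.v (h i j) ≤ matNorm h :=
  Finset.le_sup (f := fun p : Fin m × Fin n => Valued.v (h p.1 p.2)) (b := (i, j))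
    (Finset.mem_univ _)

lemma matNorm_ne_zero {h : Matrix (Fin m) (Fin n) (F 𝔽q)} (h0 : h ≠ 0) : matNorm h ≠ 0 := by
  obtain ⟨i, j, hij⟩ : ∃ i j, h i j ≠ 0 := by
    by_contra! H
    exact h0 (Matrix.ext H)
  exact ne_bot_of_le_ne_bot ((Valued.v).ne_zero_iff.mpr hij) (valuation_le_matNorm h i j)

lemma one_le_vnorm_of_inR {y : Fin n → F 𝔽q} (hy : ∀ i, inR 𝔽q (y i)) (hy0 : y ≠ 0) :
    1 ≤ vnorm 𝔽q y := by
  obtain ⟨i, hi⟩ := Function.ne_iff.mp hy0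
  exact (one_le_valuation_of_inR (hy i) hi).trans (valuation_le_vnorm y i)

lemma vnorm_vecMul_le (z : Fin m → F 𝔽q) (h : Matrix (Fin m) (Fin n) (F 𝔽q)) :
    vnorm 𝔽q (z ᵥ* h) ≤ vnorm 𝔽q z * matNorm h := by
  refine Finset.sup_le fun i _ => ?_
  simp only [vecMul, dotProduct]
  refine Valuation.map_sum_le _ fun j _ => ?_
  rw [Valuation.map_mul]
  exact mul_le_mul' (valuation_le_vnorm z j) (valuation_le_matNorm h j i)

lemma inv_matNorm_le_vnorm {z : Fin m → F 𝔽q} {h : Matrix (Fin m) (Fin n) (F 𝔽q)}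
    (hzh : 1 ≤ vnorm 𝔽q (z ᵥ* h)) : (matNorm h)⁻¹ ≤ vnorm 𝔽q z := by
  have hle := hzh.trans (vnorm_vecMul_le z h)
  have hpos : 0 < matNorm h := by
    refine zero_lt_iff.mpr fun h0 => ?_
    simp [h0] at hle
  exact (inv_le_iff_one_le_mul₀ hpos).mpr hle

end

theorem exists_lower_bound (n : ℕ)
    (x : Fin n → F 𝔽q) (hx : x ≠ 0)
    (hxconst : ∀ i, ∃ c : 𝔽q, x i = HahnSeries.C c)
    (g : GL (Fin n) (F 𝔽q)) :
    ∃ E : WithZero (Multiplicative ℤ), E ≠ 0 ∧ ∀ γ : GL (Fin n) (F 𝔽q), inGLR 𝔽q γ →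
      E ≤ vnorm 𝔽q (Matrix.vecMul x
        ((γ * g : GL (Fin n) (F 𝔽q)) : Matrix (Fin n) (Fin n) (F 𝔽q))) := by
  -- makes the matrix ring nontrivial, so that `g⁻¹ ≠ 0`
  have : Nonempty (Fin n) := let ⟨i, _⟩ := Function.ne_iff.mp hx; ⟨i⟩
  refine ⟨(matNorm (g⁻¹ : GL (Fin n) (F 𝔽q)).val)⁻¹, inv_ne_zero (matNorm_ne_zero (g⁻¹).ne_zero),
    fun γ hγ => inv_matNorm_le_vnorm ?_⟩
  rw [Matrix.vecMul_vecMul, ← Units.val_mul, mul_inv_cancel_right]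
  have hxR : ∀ i, inR 𝔽q (x i) := fun i => by
    obtain ⟨c, hc⟩ := hxconst i
    exact hc ▸ inR_C c
  refine one_le_vnorm_of_inR (inR_vecMul hxR hγ.1) fun h0 => hx ?_
  exact Matrix.vecMul_injective_of_isUnit γ.isUnit (h0.trans (Matrix.zero_vecMul _).symm)
end
end

section
/- Let a, b : Fin n → ℤ be monotone functions and let D_a, D_b be the diagonal matrices over F with (D_a) i i = X^(a i) and (D_b) i i = X^(b i). If there exist γ ∈ GL n F lying in GL n R and k ∈ GL n F lying in GL n O with D_a = γ * D_b * k, then a = b. (Theorem 2 for GL n, uniqueness: distinct antidominant diagonal matrices of powers of X lie in distinct double cosets GL_n(R) \ GL_n(F) / GL_n(O).) -/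
/-!
From `D_a = γ D_b k` we get `γ D_b = D_a k⁻¹`, i.e. `γ i j X^(b j) = X^(a i) (k⁻¹) i j`. Since
`R ∩ X O = 0`, this forces `γ i j = 0` whenever `b j < a i`. If `b i₀ < a i₀`, monotonicity
makes `γ` vanish on the block `j ≤ i₀ ≤ i`, which is too large for `γ` to be invertible. Hence
`a ≤ b`, and the same argument applied to `γ⁻¹ D_a = D_b k` gives `b ≤ a`.
-/

/- Setting: `F = 𝔽q((X))` is the field of formal Laurent series over a finite field `𝔽q`,
with valuation `v = Valued.v : F → ℤₘ₀` (normalized by `v X = ofAdd (-1)`), ring of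
integers `O = 𝔽q[[X]] = {f | v f ≤ 1}`. -/

open scoped Multiplicative

noncomputable section

variable (𝔽q : Type*) [Field 𝔽q] [Fintype 𝔽q]

open WithZero

theorem Matrix.det_eq_zero_of_forall_eq_zero_of_le_of_le {ι R : Type*} [Fintype ι]
    [LinearOrder ι] [LocallyFiniteOrderBot ι] [CommRing R] (M : Matrix ι ι R) (i₀ : ι)
    (hM : ∀ i j, j ≤ i₀ → i₀ ≤ i → M i j = 0) : M.det = 0 := by
  refine M.det_apply.trans (Finset.sum_eq_zero fun σ _ => ?_)
  -- pigeonhole: `σ` cannot map `Iic i₀` injectively into the smaller set `Iio i₀`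
  obtain ⟨j, hj, hσj⟩ : ∃ j ≤ i₀, i₀ ≤ σ j := by
    by_contra! hσ
    have := Finset.card_le_card_of_injOn σ (s := Finset.Iic i₀) (t := Finset.Iio i₀)
      (fun j hj => Finset.mem_Iio.mpr (hσ j (Finset.mem_Iic.mp hj))) σ.injective.injOn
    rw [Finset.Iic_eq_cons_Iio, Finset.card_cons] at this
    omega
  rw [Finset.prod_eq_zero (f := fun i => M (σ i) i) (Finset.mem_univ j) (hM (σ j) j hj hσj),
    smul_zero]

section

variable {K : Type*} [Field K]

lemma XX_ne_zero : XX K ≠ 0 := by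
  simp [XX]

lemma valuation_XX_zpow (m : ℤ) : Valued.v (XX K ^ m) = exp (-m) := by
  have hX : Valued.v (XX K) = exp (-1) := by
    simpa [XX] using LaurentSeries.valuation_X_pow K 1
  rw [map_zpow₀, hX, ← exp_zsmul, smul_neg, zsmul_one, Int.cast_id]

/-- A nonzero element of `R = 𝔽q[X⁻¹]` has a coefficient in some degree `≤ 0`, so its valuation
is at least `1`. -/
lemma inR.eq_zero_of_valuation_lt_one {f : F K} (hf : inR K f) (hv : Valued.v f < 1) :
    f = 0 := by
  by_contra hf0
  have hv0 : Valued.v f ≠ 0 := (Valuation.ne_zero_iff _).mpr hf0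
  have hlog : log (Valued.v f) < 0 := by
    rwa [log_lt_iff_lt_exp hv0, exp_zero]
  have hcoeff := (LaurentSeries.valuation_le_iff_coeff_lt_log_eq_zero K hv0).mp le_rfl
  obtain ⟨d, hd⟩ := HahnSeries.support_nonempty_iff.mpr hf0
  exact hd (hcoeff d (by linarith [hf.2 d hd]))

lemma inR.eq_zero_of_mul_zpow_eq_zpow_mul {f c : F K} {l m : ℤ} (hf : inR K f) (hc : inO K c)
    (hlm : l < m) (heq : f * XX K ^ l = XX K ^ m * c) : f = 0 := by
  have hf_eq : f = XX K ^ (m - l) * c := by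
    rw [zpow_sub₀ XX_ne_zero, div_mul_eq_mul_div, ← heq,
      mul_div_cancel_right₀ _ (zpow_ne_zero l XX_ne_zero)]
  refine hf.eq_zero_of_valuation_lt_one ?_
  calc Valued.v f = exp (-(m - l)) * Valued.v c := by rw [hf_eq, map_mul, valuation_XX_zpow]
    _ ≤ exp (-(m - l)) := mul_le_of_le_one_right' hc
    _ < 1 := by rw [← exp_zero, exp_lt_exp]; omega

theorem le_of_mul_diagonal_eq_diagonal_mul {ι : Type*} [Fintype ι] [LinearOrder ι]
    [LocallyFiniteOrderBot ι] {a b : ι → ℤ} (ha : Monotone a) (hb : Monotone b)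
    {M N : Matrix ι ι (F K)} (hM : M.det ≠ 0) (hMR : ∀ i j, inR K (M i j))
    (hNO : ∀ i j, inO K (N i j))
    (heq : M * Matrix.diagonal (fun i => XX K ^ b i) =
      Matrix.diagonal (fun i => XX K ^ a i) * N) :
    a ≤ b := by
  intro i₀
  by_contra! hlt
  refine hM (M.det_eq_zero_of_forall_eq_zero_of_le_of_le i₀ fun i j hj hi => ?_)
  have hij := congrFun₂ heq i j
  rw [Matrix.mul_diagonal, Matrix.diagonal_mul] at hij
  exact (hMR i j).eq_zero_of_mul_zpow_eq_zpow_mul (hNO i j)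
    ((hb hj).trans_lt (hlt.trans_le (ha hi))) hij

end

theorem local_reduction_uniqueness (n : ℕ)
    (a b : Fin n → ℤ) (ha : Monotone a) (hb : Monotone b)
    (γ k : GL (Fin n) (F 𝔽q)) (hγ : inGLR 𝔽q γ) (hk : inGLO 𝔽q k)
    (h : Matrix.diagonal (fun i => XX 𝔽q ^ (a i)) =
        (γ : Matrix (Fin n) (Fin n) (F 𝔽q)) *
          Matrix.diagonal (fun i => XX 𝔽q ^ (b i)) *
          (k : Matrix (Fin n) (Fin n) (F 𝔽q))) :
    a = b := by
  have hγb : (γ : Matrix (Fin n) (Fin n) (F 𝔽q)) * Matrix.diagonal (fun i => XX 𝔽q ^ (b i)) =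
      Matrix.diagonal (fun i => XX 𝔽q ^ (a i)) * (↑(k⁻¹) : Matrix (Fin n) (Fin n) (F 𝔽q)) := by
    rw [h, mul_assoc, Units.mul_inv, mul_one]
  have hγa : (↑(γ⁻¹) : Matrix (Fin n) (Fin n) (F 𝔽q)) *
      Matrix.diagonal (fun i => XX 𝔽q ^ (a i)) =
      Matrix.diagonal (fun i => XX 𝔽q ^ (b i)) * (k : Matrix (Fin n) (Fin n) (F 𝔽q)) := by
    rw [h, ← mul_assoc, ← mul_assoc, Units.inv_mul, one_mul]
  exact le_antisymm (le_of_mul_diagonal_eq_diagonal_mul ha hb γ.det_ne_zero hγ.1 hk.2 hγb)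
    (le_of_mul_diagonal_eq_diagonal_mul hb ha γ⁻¹.det_ne_zero hγ.2 hk.1 hγa)
end
end
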